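/- Let π : (X,G) → (Y,G) be a factor map between G-systems and U, V finite open covers of X. Then D̄(G, U ∨ V | π) = max{D̄(G,U|π), D̄(G,V|π)}, where U ∨ V = {U ∩ V : U ∈ U, V ∈ V}. -/

import Mathlib

open Filter Topology Pointwise
open scoped ENNReal

/-- A Følner sequence for a group `G`. -/
def IsFolnerSeq (G : Type*) [Group G] (F : ℕ → Finset G) : Prop :=
  (∀ n, (F n).Nonempty) ∧
    ∀ (K : Finset G) (δ : ℝ), 0 < δ →
      ∀ᶠ n in atTop,
        ((symmDiff ((K : Set G) * ((F n : Set G))) ((F n : Set G))).ncard : ℝ) <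
          δ * ((F n).card : ℝ)

/-- Amenability of a (countable discrete) group via almost invariant finite sets. -/
def IsAmenableGrp (G : Type*) [Group G] : Prop :=
  ∀ K : Finset G, K.Nonempty → ∀ δ : ℝ, 0 < δ →
    ∃ F : Finset G, F.Nonempty ∧
      ((symmDiff ((K : Set G) * (F : Set G)) (F : Set G)).ncard : ℝ) < δ * (F.card : ℝ)

/-- The finite set `A ∩ S`. -/
noncomputable def interF {G : Type*} (A : Finset G) (S : Set G) : Finset G :=
  @Finset.filter G (fun g => g ∈ S) (Classical.decPred _) A

/-- `S` belongs to `𝓘(G)` : `|S ∩ F n| → ∞`. -/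
def InI {G : Type*} (F : ℕ → Finset G) (S : Set G) : Prop :=
  Tendsto (fun n => (interF (F n) S).card) atTop atTop

/-- `D̄(S, α) = limsup_n |S ∩ F n| / |F n|^α`. -/
noncomputable def DbarAt {G : Type*} (F : ℕ → Finset G) (S : Set G) (α : ℝ) : ℝ≥0∞ :=
  atTop.limsup fun n =>
    ((interF (F n) S).card : ℝ≥0∞) / ENNReal.ofReal (((F n).card : ℝ) ^ α)

/-- `D̲(S, α) = liminf_n |S ∩ F n| / |F n|^α`. -/
noncomputable def DlowAt {G : Type*} (F : ℕ → Finset G) (S : Set G) (α : ℝ) : ℝ≥0∞ :=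
  atTop.liminf fun n =>
    ((interF (F n) S).card : ℝ≥0∞) / ENNReal.ofReal (((F n).card : ℝ) ^ α)

/-- The upper dimension `D̄(S)` of a subset `S ⊆ G`. -/
noncomputable def upperDim {G : Type*} (F : ℕ → Finset G) (S : Set G) : ℝ :=
  sInf {α : ℝ | 0 ≤ α ∧ DbarAt F S α = 0}

/-- The lower dimension `D̲(S)` of a subset `S ⊆ G`. -/
noncomputable def lowerDim {G : Type*} (F : ℕ → Finset G) (S : Set G) : ℝ :=
  sInf {α : ℝ | 0 ≤ α ∧ DlowAt F S α = 0}

/-- A finite open cover of `X`. -/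
def IsOpenCover {X : Type*} [TopologicalSpace X] (𝒰 : Set (Set X)) : Prop :=
  𝒰.Finite ∧ (∀ U ∈ 𝒰, IsOpen U) ∧ ⋃₀ 𝒰 = Set.univ

/-- Minimal number of members of `𝒰` needed to cover `E`. -/
noncomputable def coverNum {X : Type*} (𝒰 : Set (Set X)) (E : Set X) : ℕ :=
  sInf {k | ∃ t : Finset (Set X), ↑t ⊆ 𝒰 ∧ t.card = k ∧ E ⊆ ⋃₀ (t : Set (Set X))}

/-- `N(𝒰 | π) = sup_y` of the covering number of the fiber `π ⁻¹ y`. -/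
noncomputable def NRel {X Y : Type*} (𝒰 : Set (Set X)) (π : X → Y) : ℕ :=
  ⨆ y : Y, coverNum 𝒰 (π ⁻¹' {y})

/-- A factor map between `G`-systems. -/
def IsFactorMap (G : Type*) {X Y : Type*} [Group G] [TopologicalSpace X] [TopologicalSpace Y]
    [MulAction G X] [MulAction G Y] (π : X → Y) : Prop :=
  Continuous π ∧ Function.Surjective π ∧ ∀ (g : G) (x : X), π (g • x) = g • π x

/-- The join `⋁_{g ∈ B} g⁻¹ 𝒰`. -/
def dynJoin {G X : Type*} [Group G] [MulAction G X] (B : Finset G) (𝒰 : Set (Set X)) :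
    Set (Set X) :=
  {W | ∃ f : G → Set X, (∀ g ∈ B, f g ∈ 𝒰) ∧ W = ⋂ g ∈ B, (fun x => g • x) ⁻¹' f g}

/-- `h̄(G, 𝒰, α | π)`. -/
noncomputable def hRelU {G X Y : Type*} [Group G] [MulAction G X]
    (F : ℕ → Finset G) (𝒰 : Set (Set X)) (π : X → Y) (α : ℝ) : ℝ≥0∞ :=
  atTop.limsup fun n =>
    ENNReal.ofReal (Real.log (NRel (dynJoin (F n) 𝒰) π)) /
      ENNReal.ofReal (((F n).card : ℝ) ^ α)

/-- `h̲(G, 𝒰, α | π)`. -/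
noncomputable def hRelL {G X Y : Type*} [Group G] [MulAction G X]
    (F : ℕ → Finset G) (𝒰 : Set (Set X)) (π : X → Y) (α : ℝ) : ℝ≥0∞ :=
  atTop.liminf fun n =>
    ENNReal.ofReal (Real.log (NRel (dynJoin (F n) 𝒰) π)) /
      ENNReal.ofReal (((F n).card : ℝ) ^ α)

/-- The relative upper entropy dimension `D̄(G, 𝒰 | π)` of a cover. -/
noncomputable def DU {G X Y : Type*} [Group G] [MulAction G X]
    (F : ℕ → Finset G) (𝒰 : Set (Set X)) (π : X → Y) : ℝ :=
  sInf {α : ℝ | 0 ≤ α ∧ hRelU F 𝒰 π α = 0}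

/-- The relative lower entropy dimension `D̲(G, 𝒰 | π)` of a cover. -/
noncomputable def DL {G X Y : Type*} [Group G] [MulAction G X]
    (F : ℕ → Finset G) (𝒰 : Set (Set X)) (π : X → Y) : ℝ :=
  sInf {α : ℝ | 0 ≤ α ∧ hRelL F 𝒰 π α = 0}

/-- The relative upper entropy dimension `D̄(X, G | π)` of the system. -/
noncomputable def DUSys {G X Y : Type*} [Group G] [TopologicalSpace X] [MulAction G X]
    (F : ℕ → Finset G) (π : X → Y) : ℝ :=
  sSup {d : ℝ | ∃ 𝒰 : Set (Set X), IsOpenCover 𝒰 ∧ d = DU F 𝒰 π}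

/-- The relative lower entropy dimension `D̲(X, G | π)` of the system. -/
noncomputable def DLSys {G X Y : Type*} [Group G] [TopologicalSpace X] [MulAction G X]
    (F : ℕ → Finset G) (π : X → Y) : ℝ :=
  sSup {d : ℝ | ∃ 𝒰 : Set (Set X), IsOpenCover 𝒰 ∧ d = DL F 𝒰 π}

/-- `(1 / |F n ∩ S|) log N(⋁_{g ∈ F n ∩ S} g⁻¹ 𝒰 | π)`. -/
noncomputable def entAlong {G X Y : Type*} [Group G] [MulAction G X]
    (F : ℕ → Finset G) (S : Set G) (𝒰 : Set (Set X)) (π : X → Y) : ℕ → ℝ≥0∞ :=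
  fun n =>
    ENNReal.ofReal (Real.log (NRel (dynJoin (interF (F n) S) 𝒰) π)) /
      ((interF (F n) S).card : ℝ≥0∞)

/-- `S` is a relative entropy generating set of `𝒰` relative to `π`. -/
def IsEntGen {G X Y : Type*} [Group G] [MulAction G X]
    (F : ℕ → Finset G) (S : Set G) (𝒰 : Set (Set X)) (π : X → Y) : Prop :=
  InI F S ∧ 0 < atTop.liminf (entAlong F S 𝒰 π)

/-- `S ∈ 𝒫(G, 𝒰 | π)` : positive relative upper entropy along `S`. -/
def InP {G X Y : Type*} [Group G] [MulAction G X]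
    (F : ℕ → Finset G) (S : Set G) (𝒰 : Set (Set X)) (π : X → Y) : Prop :=
  InI F S ∧ 0 < atTop.limsup (entAlong F S 𝒰 π)

/-- `D̄_e(G, 𝒰 | π)`. -/
noncomputable def DeU {G X Y : Type*} [Group G] [MulAction G X]
    (F : ℕ → Finset G) (𝒰 : Set (Set X)) (π : X → Y) : ℝ :=
  sSup {d : ℝ | ∃ S : Set G, IsEntGen F S 𝒰 π ∧ d = upperDim F S}

/-- `D̲_e(G, 𝒰 | π)`. -/
noncomputable def DeL {G X Y : Type*} [Group G] [MulAction G X]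
    (F : ℕ → Finset G) (𝒰 : Set (Set X)) (π : X → Y) : ℝ :=
  sSup {d : ℝ | ∃ S : Set G, IsEntGen F S 𝒰 π ∧ d = lowerDim F S}

/-- `D̄_p(G, 𝒰 | π)`. -/
noncomputable def DpU {G X Y : Type*} [Group G] [MulAction G X]
    (F : ℕ → Finset G) (𝒰 : Set (Set X)) (π : X → Y) : ℝ :=
  sSup {d : ℝ | ∃ S : Set G, InP F S 𝒰 π ∧ d = upperDim F S}

/-- `D̲_p(G, 𝒰 | π)`. -/
noncomputable def DpL {G X Y : Type*} [Group G] [MulAction G X]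
    (F : ℕ → Finset G) (𝒰 : Set (Set X)) (π : X → Y) : ℝ :=
  sSup {d : ℝ | ∃ S : Set G, InP F S 𝒰 π ∧ d = lowerDim F S}

/-- `D̄_e(X, G | π)`. -/
noncomputable def DeUSys {G X Y : Type*} [Group G] [TopologicalSpace X] [MulAction G X]
    (F : ℕ → Finset G) (π : X → Y) : ℝ :=
  sSup {d : ℝ | ∃ 𝒰 : Set (Set X), IsOpenCover 𝒰 ∧ d = DeU F 𝒰 π}

/-- `D̲_p(X, G | π)`. -/
noncomputable def DpLSys {G X Y : Type*} [Group G] [TopologicalSpace X] [MulAction G X]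
    (F : ℕ → Finset G) (π : X → Y) : ℝ :=
  sSup {d : ℝ | ∃ 𝒰 : Set (Set X), IsOpenCover 𝒰 ∧ d = DpL F 𝒰 π}

/-- The cover `{X ∖ cl B(x i, 1/k) : i}` associated with a tuple. -/
def ballCover {X : Type*} [MetricSpace X] {n : ℕ} (x : Fin n → X) (k : ℕ) : Set (Set X) :=
  {V | ∃ i : Fin n, V = (Metric.closedBall (x i) (1 / (k : ℝ)))ᶜ}

/-- The relative entropy dimension `D̄(x₁, …, x_n | π)` of a tuple. -/
noncomputable def tupleDim {G X Y : Type*} [Group G] [MetricSpace X] [MulAction G X] {n : ℕ}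
    (F : ℕ → Finset G) (x : Fin n → X) (π : X → Y) : ℝ :=
  limUnder atTop fun k : ℕ => DU F (ballCover x k) π

/-- The tuple lies on the diagonal. -/
def IsDiag {X : Type*} {n : ℕ} (x : Fin n → X) : Prop := ∀ i j, x i = x j

/-- The `n`-th relative dimension set `𝒟_n(X, G | π)`. -/
noncomputable def dimSet {G X Z : Type*} [Group G] [MetricSpace X] [MulAction G X]
    (F : ℕ → Finset G) (π : X → Z) (n : ℕ) : Set ℝ :=
  {α : ℝ | 0 ≤ α ∧ ∃ x : Fin n → X, ¬ IsDiag x ∧ tupleDim F x π = α}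

/-- The translated cover `g𝒰`. -/
def smulCover {G X : Type*} [SMul G X] (g : G) (𝒰 : Set (Set X)) : Set (Set X) :=
  (fun U => (fun x => g • x) '' U) '' 𝒰

/-- The join `𝒰 ∨ 𝒱` of two covers. -/
def covJoin {X : Type*} (𝒰 𝒱 : Set (Set X)) : Set (Set X) :=
  {W | ∃ U ∈ 𝒰, ∃ V ∈ 𝒱, W = U ∩ V}

/-- A standard cover: two non-dense open sets covering `X`. -/
def IsStandardCover {X : Type*} [TopologicalSpace X] (𝒲 : Set (Set X)) : Prop :=
  ∃ U V : Set X, 𝒲 = {U, V} ∧ IsOpen U ∧ IsOpen V ∧ U ∪ V = Set.univ ∧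
    ¬ Dense U ∧ ¬ Dense V

/-!
Refining a cover can only increase relative covering numbers, and intersecting optimal covers
of a fibre by members of `⋁ g⁻¹𝒰` and of `⋁ g⁻¹𝒱` gives
`N(⋁ g⁻¹(𝒰 ∨ 𝒱) | π) ≤ N(⋁ g⁻¹𝒰 | π) · N(⋁ g⁻¹𝒱 | π)`.
Taking logarithms, for every `α` the upper relative entropy of `𝒰 ∨ 𝒱` at scale `|F n| ^ α`
vanishes iff those of `𝒰` and of `𝒱` both vanish. If `|F n| → ∞`, the exponents with vanishing
entropy form nonempty up-closed half-lines (they contain `2`), and the infimum of the intersection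
of two such half-lines is the larger infimum. Otherwise the increasing sequence `F n` is
eventually constant, each set of exponents is `∅` or `[0, ∞)`, and all three dimensions are `0`
(with `sInf ∅ = 0`).
-/

open Set

def Refines {X : Type*} (𝒟 𝒞 : Set (Set X)) : Prop :=
  ∀ W ∈ 𝒟, ∃ W' ∈ 𝒞, W ⊆ W'

lemma Real.log_natCast_monotone : Monotone fun n : ℕ => Real.log n := by
  intro a b h
  rcases Nat.eq_zero_or_pos a with rfl | ha
  · simpa using Real.log_natCast_nonneg b
  · exact Real.log_le_log (by exact_mod_cast ha) (by exact_mod_cast h)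

lemma Real.log_natCast_mul_le (a b : ℕ) :
    Real.log ((a * b : ℕ) : ℝ) ≤ Real.log a + Real.log b := by
  rcases eq_or_ne a 0 with rfl | ha
  · simpa using Real.log_natCast_nonneg b
  rcases eq_or_ne b 0 with rfl | hb
  · simpa using Real.log_natCast_nonneg a
  rw [Nat.cast_mul, Real.log_mul (by exact_mod_cast ha) (by exact_mod_cast hb)]

lemma csInf_inter_eq_max_of_isUpperSet {α : Type*} [ConditionallyCompleteLinearOrder α]
    {A B : Set α} (hA : IsUpperSet A) (hB : IsUpperSet B) (hA₀ : A.Nonempty) (hB₀ : B.Nonempty)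
    (hAb : BddBelow A) (hBb : BddBelow B) :
    sInf (A ∩ B) = max (sInf A) (sInf B) := by
  rcases hA.total hB with h | h
  · rw [inter_eq_left.2 h, max_eq_left (csInf_le_csInf hBb hA₀ h)]
  · rw [inter_eq_right.2 h, max_eq_right (csInf_le_csInf hAb hB₀ h)]

section CoverNum

variable {X : Type*} {𝒞 𝒟 𝒞₁ 𝒞₂ : Set (Set X)} {E : Set X}

lemma coverNum_le_card {t : Finset (Set X)} (ht : ↑t ⊆ 𝒞) (hE : E ⊆ ⋃₀ ↑t) :
    coverNum 𝒞 E ≤ t.card :=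
  Nat.sInf_le ⟨t, ht, rfl, hE⟩

lemma exists_finset_card_eq_coverNum (h𝒞 : 𝒞.Finite) (hE : E ⊆ ⋃₀ 𝒞) :
    ∃ t : Finset (Set X), ↑t ⊆ 𝒞 ∧ t.card = coverNum 𝒞 E ∧ E ⊆ ⋃₀ ↑t := by
  have hne : {k | ∃ t : Finset (Set X), ↑t ⊆ 𝒞 ∧ t.card = k ∧ E ⊆ ⋃₀ ↑t}.Nonempty :=
    ⟨_, h𝒞.toFinset, by simp, rfl, by simpa⟩
  exact Nat.sInf_mem hne

lemma coverNum_le_of_refines (h : Refines 𝒟 𝒞) (h𝒟 : 𝒟.Finite) (hE : E ⊆ ⋃₀ 𝒟) :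
    coverNum 𝒞 E ≤ coverNum 𝒟 E := by
  classical
  obtain ⟨t, ht, hcard, hEt⟩ := exists_finset_card_eq_coverNum h𝒟 hE
  choose! ψ hψ𝒞 hψ using h
  calc coverNum 𝒞 E ≤ (t.image ψ).card := by
        refine coverNum_le_card ?_ ?_
        · intro W' hW'
          obtain ⟨W, hW, rfl⟩ := Finset.mem_image.1 hW'
          exact hψ𝒞 W (ht hW)
        · intro x hx
          obtain ⟨W, hWt, hxW⟩ := hEt hx
          exact ⟨ψ W, Finset.mem_image_of_mem ψ hWt, hψ W (ht hWt) hxW⟩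
    _ ≤ t.card := Finset.card_image_le
    _ = coverNum 𝒟 E := hcard

lemma coverNum_le_mul (h : ∀ W₁ ∈ 𝒞₁, ∀ W₂ ∈ 𝒞₂, W₁ ∩ W₂ ∈ 𝒞)
    (h₁ : 𝒞₁.Finite) (hE₁ : E ⊆ ⋃₀ 𝒞₁) (h₂ : 𝒞₂.Finite) (hE₂ : E ⊆ ⋃₀ 𝒞₂) :
    coverNum 𝒞 E ≤ coverNum 𝒞₁ E * coverNum 𝒞₂ E := by
  classical
  obtain ⟨t, ht, htc, hEt⟩ := exists_finset_card_eq_coverNum h₁ hE₁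
  obtain ⟨s, hs, hsc, hEs⟩ := exists_finset_card_eq_coverNum h₂ hE₂
  calc coverNum 𝒞 E ≤ ((t ×ˢ s).image fun p => p.1 ∩ p.2).card := by
        refine coverNum_le_card ?_ ?_
        · intro W hW
          obtain ⟨⟨W₁, W₂⟩, hW₁₂, rfl⟩ := Finset.mem_image.1 hW
          obtain ⟨hW₁, hW₂⟩ := Finset.mem_product.1 hW₁₂
          exact h W₁ (ht hW₁) W₂ (hs hW₂)
        · intro x hx
          obtain ⟨W₁, hW₁, hx₁⟩ := hEt hx
          obtain ⟨W₂, hW₂, hx₂⟩ := hEs hx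
          exact ⟨W₁ ∩ W₂, Finset.mem_image_of_mem _ (Finset.mk_mem_product hW₁ hW₂), hx₁, hx₂⟩
    _ ≤ (t ×ˢ s).card := Finset.card_image_le
    _ = coverNum 𝒞₁ E * coverNum 𝒞₂ E := by rw [Finset.card_product, htc, hsc]

end CoverNum

section DynJoin

variable {G X : Type*} [Group G] [MulAction G X] {𝒞 𝒟 𝒰 𝒱 : Set (Set X)}

lemma sUnion_dynJoin (hc : ⋃₀ 𝒞 = univ) (B : Finset G) : ⋃₀ dynJoin B 𝒞 = univ := by
  refine eq_univ_of_forall fun x => ?_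
  have h : ∀ g : G, ∃ U ∈ 𝒞, g • x ∈ U := fun g => by
    simpa using (hc.symm ▸ mem_univ (g • x) : g • x ∈ ⋃₀ 𝒞)
  choose f hf𝒞 hf using h
  exact ⟨_, ⟨f, fun g _ => hf𝒞 g, rfl⟩, mem_iInter₂.2 fun g _ => hf g⟩

lemma exists_finset_dynJoin_subset_card_le (h𝒞 : 𝒞.Finite) (B : Finset G) :
    ∃ T : Finset (Set X), dynJoin B 𝒞 ⊆ ↑T ∧ T.card ≤ h𝒞.toFinset.card ^ B.card := by
  classical
  induction B using Finset.induction with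
  | empty =>
    refine ⟨{univ}, ?_, by simp⟩
    rintro W ⟨f, -, rfl⟩
    simp
  | @insert a B ha ih =>
    obtain ⟨T, hT, hTc⟩ := ih
    refine ⟨(h𝒞.toFinset ×ˢ T).image fun p => (fun y => a • y) ⁻¹' p.1 ∩ p.2, ?_, ?_⟩
    · rintro W ⟨f, hf, rfl⟩
      rw [Finset.set_biInter_insert]
      refine Finset.mem_image_of_mem _ (Finset.mk_mem_product ?_ ?_)
      · exact h𝒞.mem_toFinset.2 (hf a (Finset.mem_insert_self a B))
      · exact hT ⟨f, fun g hg => hf g (Finset.mem_insert_of_mem hg), rfl⟩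
    · calc _ ≤ (h𝒞.toFinset ×ˢ T).card := Finset.card_image_le
        _ = h𝒞.toFinset.card * T.card := Finset.card_product _ _
        _ ≤ h𝒞.toFinset.card * h𝒞.toFinset.card ^ B.card := Nat.mul_le_mul_left _ hTc
        _ = h𝒞.toFinset.card ^ (insert a B).card := by
            rw [Finset.card_insert_of_notMem ha, pow_succ, mul_comm]

lemma dynJoin_finite (h𝒞 : 𝒞.Finite) (B : Finset G) : (dynJoin B 𝒞).Finite :=
  let ⟨T, hT, _⟩ := exists_finset_dynJoin_subset_card_le h𝒞 B
  T.finite_toSet.subset hT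

lemma coverNum_dynJoin_le_pow (h𝒞 : 𝒞.Finite) (hc : ⋃₀ 𝒞 = univ) (B : Finset G) (E : Set X) :
    coverNum (dynJoin B 𝒞) E ≤ h𝒞.toFinset.card ^ B.card := by
  obtain ⟨T, hT, hTc⟩ := exists_finset_dynJoin_subset_card_le h𝒞 B
  have hfin := dynJoin_finite h𝒞 B
  refine (coverNum_le_card (t := hfin.toFinset) (by simp) ?_).trans
    ((Finset.card_le_card ?_).trans hTc)
  · simp [sUnion_dynJoin hc B]
  · simpa using hT

lemma Refines.dynJoin (h : Refines 𝒟 𝒞) (B : Finset G) : Refines (dynJoin B 𝒟) (dynJoin B 𝒞) := by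
  rintro _ ⟨f, hf, rfl⟩
  choose! ψ hψ𝒞 hψ using h
  exact ⟨_, ⟨ψ ∘ f, fun g hg => hψ𝒞 _ (hf g hg), rfl⟩,
    iInter₂_mono fun g hg => preimage_mono (hψ _ (hf g hg))⟩

lemma covJoin_finite (h𝒰 : 𝒰.Finite) (h𝒱 : 𝒱.Finite) : (covJoin 𝒰 𝒱).Finite := by
  have : covJoin 𝒰 𝒱 = image2 (· ∩ ·) 𝒰 𝒱 := by
    ext W
    simp only [covJoin, mem_image2, mem_ofPred_eq, eq_comm]
  exact this ▸ h𝒰.image2 _ h𝒱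

lemma sUnion_covJoin (h𝒰 : ⋃₀ 𝒰 = univ) (h𝒱 : ⋃₀ 𝒱 = univ) : ⋃₀ covJoin 𝒰 𝒱 = univ := by
  refine eq_univ_of_forall fun x => ?_
  obtain ⟨U, hU, hxU⟩ := (h𝒰.symm ▸ mem_univ x : x ∈ ⋃₀ 𝒰)
  obtain ⟨V, hV, hxV⟩ := (h𝒱.symm ▸ mem_univ x : x ∈ ⋃₀ 𝒱)
  exact ⟨U ∩ V, ⟨U, hU, V, hV, rfl⟩, hxU, hxV⟩

lemma covJoin_refines_left : Refines (covJoin 𝒰 𝒱) 𝒰 := by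
  rintro _ ⟨U, hU, V, -, rfl⟩
  exact ⟨U, hU, inter_subset_left⟩

lemma covJoin_refines_right : Refines (covJoin 𝒰 𝒱) 𝒱 := by
  rintro _ ⟨U, -, V, hV, rfl⟩
  exact ⟨V, hV, inter_subset_right⟩

lemma inter_mem_dynJoin_covJoin {B : Finset G} {W W' : Set X} (hW : W ∈ dynJoin B 𝒰)
    (hW' : W' ∈ dynJoin B 𝒱) : W ∩ W' ∈ dynJoin B (covJoin 𝒰 𝒱) := by
  obtain ⟨f, hf, rfl⟩ := hW
  obtain ⟨f', hf', rfl⟩ := hW'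
  refine ⟨fun g => f g ∩ f' g, fun g hg => ⟨f g, hf g hg, f' g, hf' g hg, rfl⟩, ?_⟩
  simp only [preimage_inter, iInter_inter_distrib]

end DynJoin

section NRel

variable {G X Y : Type*} [Group G] [MulAction G X] {𝒞 𝒟 𝒰 𝒱 : Set (Set X)}
  (B : Finset G) (π : X → Y)

lemma NRel_dynJoin_le_pow (h𝒞 : 𝒞.Finite) (hc : ⋃₀ 𝒞 = univ) :
    NRel (dynJoin B 𝒞) π ≤ h𝒞.toFinset.card ^ B.card :=
  ciSup_le' fun _ => coverNum_dynJoin_le_pow h𝒞 hc B _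

lemma coverNum_dynJoin_le_NRel (h𝒞 : 𝒞.Finite) (hc : ⋃₀ 𝒞 = univ) (y : Y) :
    coverNum (dynJoin B 𝒞) (π ⁻¹' {y}) ≤ NRel (dynJoin B 𝒞) π :=
  le_ciSup (f := fun y => coverNum (dynJoin B 𝒞) (π ⁻¹' {y}))
    ⟨_, forall_mem_range.2 fun _ => coverNum_dynJoin_le_pow h𝒞 hc B _⟩ y

lemma NRel_dynJoin_le_of_refines (h : Refines 𝒟 𝒞) (h𝒟 : 𝒟.Finite) (hd : ⋃₀ 𝒟 = univ) :
    NRel (dynJoin B 𝒞) π ≤ NRel (dynJoin B 𝒟) π :=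
  ciSup_le' fun y => (coverNum_le_of_refines (h.dynJoin B) (dynJoin_finite h𝒟 B)
    (by simp [sUnion_dynJoin hd B])).trans (coverNum_dynJoin_le_NRel B π h𝒟 hd y)

lemma NRel_dynJoin_covJoin_le_mul (h𝒰 : 𝒰.Finite) (hu : ⋃₀ 𝒰 = univ) (h𝒱 : 𝒱.Finite)
    (hv : ⋃₀ 𝒱 = univ) :
    NRel (dynJoin B (covJoin 𝒰 𝒱)) π ≤ NRel (dynJoin B 𝒰) π * NRel (dynJoin B 𝒱) π :=
  ciSup_le' fun y =>
    (coverNum_le_mul (fun _ hW _ hW' => inter_mem_dynJoin_covJoin hW hW')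
      (dynJoin_finite h𝒰 B) (by simp [sUnion_dynJoin hu B])
      (dynJoin_finite h𝒱 B) (by simp [sUnion_dynJoin hv B])).trans
    (Nat.mul_le_mul (coverNum_dynJoin_le_NRel B π h𝒰 hu y)
      (coverNum_dynJoin_le_NRel B π h𝒱 hv y))

end NRel

section Entropy

open Filter Topology

variable {G X Y : Type*} [Group G] [MulAction G X] {F : ℕ → Finset G} {𝒞 𝒟 𝒰 𝒱 : Set (Set X)}
  {π : X → Y}

lemma hRelU_mono_of_NRel_le (h : ∀ n, NRel (dynJoin (F n) 𝒞) π ≤ NRel (dynJoin (F n) 𝒟) π)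
    (α : ℝ) : hRelU F 𝒞 π α ≤ hRelU F 𝒟 π α :=
  limsup_le_limsup (.of_forall fun n =>
    ENNReal.div_le_div_right (ENNReal.ofReal_le_ofReal (Real.log_natCast_monotone (h n))) _)

lemma hRelU_antitone (hF : ∀ n, (F n).Nonempty) : Antitone (hRelU F 𝒞 π) := by
  intro α β hαβ
  refine limsup_le_limsup (.of_forall fun n => ENNReal.div_le_div_left ?_ _)
  have hcard : (1 : ℝ) ≤ (F n).card := by exact_mod_cast (hF n).card_pos
  exact ENNReal.ofReal_le_ofReal (Real.rpow_le_rpow_of_exponent_le hcard hαβ)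

lemma isUpperSet_setOf_hRelU_eq_zero (hF : ∀ n, (F n).Nonempty) :
    IsUpperSet {α : ℝ | 0 ≤ α ∧ hRelU F 𝒞 π α = 0} := fun _ _ hαβ ⟨hα, h⟩ =>
  ⟨hα.trans hαβ, le_antisymm (h ▸ hRelU_antitone hF hαβ) bot_le⟩

lemma log_NRel_dynJoin_covJoin_le (B : Finset G) (h𝒰 : 𝒰.Finite) (hu : ⋃₀ 𝒰 = univ)
    (h𝒱 : 𝒱.Finite) (hv : ⋃₀ 𝒱 = univ) :
    Real.log (NRel (dynJoin B (covJoin 𝒰 𝒱)) π) ≤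
      Real.log (NRel (dynJoin B 𝒰) π) + Real.log (NRel (dynJoin B 𝒱) π) :=
  (Real.log_natCast_monotone (NRel_dynJoin_covJoin_le_mul B π h𝒰 hu h𝒱 hv)).trans
    (Real.log_natCast_mul_le _ _)

lemma hRelU_covJoin_eq_zero_iff (h𝒰 : 𝒰.Finite) (hu : ⋃₀ 𝒰 = univ) (h𝒱 : 𝒱.Finite)
    (hv : ⋃₀ 𝒱 = univ) (α : ℝ) :
    hRelU F (covJoin 𝒰 𝒱) π α = 0 ↔ hRelU F 𝒰 π α = 0 ∧ hRelU F 𝒱 π α = 0 := by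
  have hJ := covJoin_finite h𝒰 h𝒱
  have hj := sUnion_covJoin hu hv
  refine ⟨fun h => ⟨?_, ?_⟩, fun ⟨hU, hV⟩ => le_antisymm ?_ bot_le⟩
  · exact le_antisymm (h ▸ hRelU_mono_of_NRel_le
      (fun n => NRel_dynJoin_le_of_refines _ π covJoin_refines_left hJ hj) α) bot_le
  · exact le_antisymm (h ▸ hRelU_mono_of_NRel_le
      (fun n => NRel_dynJoin_le_of_refines _ π covJoin_refines_right hJ hj) α) bot_le
  set d : ℕ → ℝ≥0∞ := fun n => ENNReal.ofReal (((F n).card : ℝ) ^ α)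
  set u : ℕ → ℝ≥0∞ := fun n => ENNReal.ofReal (Real.log (NRel (dynJoin (F n) 𝒰) π)) / d n
  set v : ℕ → ℝ≥0∞ := fun n => ENNReal.ofReal (Real.log (NRel (dynJoin (F n) 𝒱) π)) / d n
  have hv₀ : Tendsto v atTop (𝓝 0) := tendsto_of_le_liminf_of_limsup_le bot_le hV.le
  calc hRelU F (covJoin 𝒰 𝒱) π α ≤ limsup (u + v) atTop := by
        refine limsup_le_limsup (.of_forall fun n => ?_)
        rw [Pi.add_apply, ← ENNReal.add_div, ← ENNReal.ofReal_add (Real.log_natCast_nonneg _)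
          (Real.log_natCast_nonneg _)]
        exact ENNReal.div_le_div_right (ENNReal.ofReal_le_ofReal
          (log_NRel_dynJoin_covJoin_le _ h𝒰 hu h𝒱 hv)) _
    _ = 0 := by rw [ENNReal.limsup_add_of_right_tendsto_zero hv₀]; exact hU

lemma setOf_hRelU_covJoin_eq_zero (h𝒰 : 𝒰.Finite) (hu : ⋃₀ 𝒰 = univ) (h𝒱 : 𝒱.Finite)
    (hv : ⋃₀ 𝒱 = univ) :
    {α : ℝ | 0 ≤ α ∧ hRelU F (covJoin 𝒰 𝒱) π α = 0} =
      {α | 0 ≤ α ∧ hRelU F 𝒰 π α = 0} ∩ {α | 0 ≤ α ∧ hRelU F 𝒱 π α = 0} := by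
  ext α
  simp only [mem_inter_iff, mem_ofPred_eq, hRelU_covJoin_eq_zero_iff h𝒰 hu h𝒱 hv]
  tauto

lemma hRelU_two_eq_zero (hF : ∀ n, (F n).Nonempty)
    (hcard : Tendsto (fun n => (F n).card) atTop atTop) (h𝒞 : 𝒞.Finite) (hc : ⋃₀ 𝒞 = univ) : hRelU F 𝒞 π 2 = 0 := by
  set M := h𝒞.toFinset.card
  have hbound : ∀ n, ENNReal.ofReal (Real.log (NRel (dynJoin (F n) 𝒞) π)) /
      ENNReal.ofReal (((F n).card : ℝ) ^ (2 : ℝ)) ≤ ENNReal.ofReal (Real.log M / (F n).card) := by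
    intro n
    have hpos : (0 : ℝ) < (F n).card := by exact_mod_cast (hF n).card_pos
    have hlog : Real.log (NRel (dynJoin (F n) 𝒞) π) ≤ (F n).card * Real.log M := by
      simpa [Real.log_pow] using Real.log_natCast_monotone (NRel_dynJoin_le_pow (F n) π h𝒞 hc)
    rw [← ENNReal.ofReal_div_of_pos (by positivity), Real.rpow_two]
    refine ENNReal.ofReal_le_ofReal ?_
    calc Real.log (NRel (dynJoin (F n) 𝒞) π) / ((F n).card : ℝ) ^ 2
        ≤ (F n).card * Real.log M / ((F n).card : ℝ) ^ 2 := by gcongr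
      _ = Real.log M / (F n).card := by field_simp
  have hlim : Tendsto (fun n => ENNReal.ofReal (Real.log M / (F n).card)) atTop (𝓝 0) := by
    simpa using ENNReal.tendsto_ofReal
      ((tendsto_const_div_atTop_nhds_zero_nat (Real.log M)).comp hcard)
  exact le_antisymm ((limsup_le_limsup (.of_forall hbound)).trans_eq hlim.limsup_eq) bot_le

lemma DU_eq_zero_of_eventually_const {N : ℕ} (hN : ∀ n, N ≤ n → F n = F N) :
    DU F 𝒞 π = 0 := by
  set L := ENNReal.ofReal (Real.log (NRel (dynJoin (F N) 𝒞) π))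
  have hval : ∀ α : ℝ, hRelU F 𝒞 π α = L / ENNReal.ofReal (((F N).card : ℝ) ^ α) := fun α =>
    (limsup_congr (eventually_atTop.2 ⟨N, fun n hn => by rw [hN n hn]⟩)).trans (limsup_const _)
  have hset : {α : ℝ | 0 ≤ α ∧ hRelU F 𝒞 π α = 0} = {α | 0 ≤ α ∧ L = 0} := by
    ext α
    simp [hval, ENNReal.div_eq_zero_iff]
  rw [DU, hset]
  by_cases hL : L = 0
  · simp only [hL, and_true]
    exact csInf_Ici
  · simp [hL]

end Entropy

open Filter in
lemma Monotone.tendsto_card_atTop_or_eventually_const {α : Type*} {F : ℕ → Finset α}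
    (hF : Monotone F) :
    Tendsto (fun n => (F n).card) atTop atTop ∨ ∃ N, ∀ n, N ≤ n → F n = F N := by
  refine (tendsto_atTop_of_monotone fun _ _ h => Finset.card_le_card (hF h)).imp_right ?_
  rintro ⟨l, hl⟩
  obtain ⟨N, hN⟩ := eventually_atTop.1 (tendsto_pure.1 (nhds_discrete ℕ ▸ hl))
  exact ⟨N, fun n hn =>
    (Finset.eq_of_subset_of_card_le (hF hn) (by rw [hN n hn, hN N le_rfl])).symm⟩

theorem stmt5_general {G X Y : Type*} [Group G]
    [MetricSpace X]
    [MulAction G X]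
    (π : X → Y)
    (F : ℕ → Finset G) (hF : IsFolnerSeq G F) (hFmono : ∀ n, F n ⊆ F (n + 1))
    (𝒰 𝒱 : Set (Set X)) (h𝒰 : IsOpenCover 𝒰) (h𝒱 : IsOpenCover 𝒱) :
    DU F (covJoin 𝒰 𝒱) π = max (DU F 𝒰 π) (DU F 𝒱 π) := by
  obtain ⟨h𝒰, -, hu⟩ := h𝒰
  obtain ⟨h𝒱, -, hv⟩ := h𝒱
  rcases (monotone_nat_of_le_succ hFmono).tendsto_card_atTop_or_eventually_const
    with hcard | ⟨N, hN⟩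
  · rw [DU, DU, DU, setOf_hRelU_covJoin_eq_zero h𝒰 hu h𝒱 hv]
    exact csInf_inter_eq_max_of_isUpperSet (isUpperSet_setOf_hRelU_eq_zero hF.1)
      (isUpperSet_setOf_hRelU_eq_zero hF.1) ⟨2, zero_le_two, hRelU_two_eq_zero hF.1 hcard h𝒰 hu⟩
      ⟨2, zero_le_two, hRelU_two_eq_zero hF.1 hcard h𝒱 hv⟩ ⟨0, fun _ h => h.1⟩ ⟨0, fun _ h => h.1⟩
  · rw [DU_eq_zero_of_eventually_const hN, DU_eq_zero_of_eventually_const hN,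
      DU_eq_zero_of_eventually_const hN, max_self]

theorem stmt5 {G X Y : Type*} [Group G] [Countable G]
    [MetricSpace X] [CompactSpace X] [MetricSpace Y] [CompactSpace Y]
    [MulAction G X] [MulAction G Y]
    (hcX : ∀ g : G, Continuous fun x : X => g • x)
    (hcY : ∀ g : G, Continuous fun y : Y => g • y)
    (π : X → Y) (hπ : IsFactorMap G π)
    (F : ℕ → Finset G) (hF : IsFolnerSeq G F) (hFmono : ∀ n, F n ⊆ F (n + 1))
    (𝒰 𝒱 : Set (Set X)) (h𝒰 : IsOpenCover 𝒰) (h𝒱 : IsOpenCover 𝒱) :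
    DU F (covJoin 𝒰 𝒱) π = max (DU F 𝒰 π) (DU F 𝒱 π) :=
  stmt5_general π F hF hFmono 𝒰 𝒱 h𝒰 h𝒱
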